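/- Let (F̃, d) be a homotopically fine ℤ-graded differential presheaf on a compact space X satisfying the surjectivity and injectivity properties. Then the natural morphism from the cohomology of global presheaf sections H^p(F̃(X), d) to the hypercohomology ℍ^p(X, (F, d)) of the associated differential sheaf is an isomorphism for every p. -/

import Mathlib

/-!
Statement 5 (Proposition A.5 of the paper): for a homotopically fine ℤ-graded
differential presheaf `(F̃, d)` on a compact space `X` satisfying the
surjectivity and injectivity properties, the natural morphism
`H^p(F̃(X), d) → ℍ^p(X, (F, d))` is an isomorphism for every `p`; by
Theorem A.4, the hypercohomology of the associated differential sheaf is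
computed by the cohomology of its global sections, which we realize
concretely as locally representable families of germs.

The isomorphism on cohomology is expressed representative-wise (the natural
map is a chain map, it is surjective and injective on cohomology).
-/

open TopologicalSpace

namespace Stmt5

/-- A presheaf of `K`-vector spaces on `X`. -/
structure Psh (K : Type) [Field K] (X : Type) [TopologicalSpace X] where
  sec : Opens X → Type
  [acg : ∀ U, AddCommGroup (sec U)]
  [mod : ∀ U, Module K (sec U)]
  res : ∀ {U V : Opens X}, V ≤ U → sec U →ₗ[K] sec V
  res_rfl : ∀ (U : Opens X) (s : sec U), res (le_refl U) s = s
  res_res : ∀ {U V W : Opens X} (hVU : V ≤ U) (hWV : W ≤ V) (s : sec U),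
      res hWV (res hVU s) = res (hWV.trans hVU) s

attribute [instance] Psh.acg Psh.mod

variable {K : Type} [Field K] {X : Type} [TopologicalSpace X]

/-- The germ relation at `x`. -/
def germSetoid (F : Psh K X) (x : X) :
    Setoid (Σ U : {U : Opens X // x ∈ U}, F.sec U.1) where
  r a b := ∃ (W : Opens X) (hxW : x ∈ W) (h1 : W ≤ a.1.1) (h2 : W ≤ b.1.1),
    F.res h1 a.2 = F.res h2 b.2
  iseqv := by
    constructor
    · rintro ⟨U, s⟩
      exact ⟨U.1, U.2, le_rfl, le_rfl, rfl⟩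
    · rintro a b ⟨W, hxW, h1, h2, h⟩
      exact ⟨W, hxW, h2, h1, h.symm⟩
    · rintro a b c ⟨W, hxW, h1, h2, h⟩ ⟨W', hxW', h1', h2', h'⟩
      refine ⟨W ⊓ W', ⟨hxW, hxW'⟩, inf_le_left.trans h1, inf_le_right.trans h2', ?_⟩
      rw [← F.res_res h1 inf_le_left, ← F.res_res h2' inf_le_right, h, ← h',
        F.res_res, F.res_res]

/-- The stalk of (the sheafification of) `F` at `x`. -/
def Stalk (F : Psh K X) (x : X) : Type := Quotient (germSetoid F x)

/-- The germ of a section at a point. -/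
def germ (F : Psh K X) {U : Opens X} (x : X) (hx : x ∈ U) (s : F.sec U) :
    Stalk F x := Quotient.mk _ ⟨⟨U, hx⟩, s⟩

theorem germ_ext (F : Psh K X) {U V W : Opens X} {x : X}
    (hxU : x ∈ U) (hxV : x ∈ V) (s : F.sec U) (t : F.sec V)
    (hxW : x ∈ W) (hWU : W ≤ U) (hWV : W ≤ V)
    (h : F.res hWU s = F.res hWV t) :
    germ F x hxU s = germ F x hxV t := Quotient.sound ⟨W, hxW, hWU, hWV, h⟩

theorem mem_inf' {U V : Opens X} {x : X} (hU : x ∈ U) (hV : x ∈ V) :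
    x ∈ U ⊓ V := ⟨hU, hV⟩

variable {F : Psh K X} {x : X}

protected noncomputable def Stalk.add (a b : Stalk F x) : Stalk F x :=
  Quotient.lift₂
    (fun a b => germ F x (mem_inf' a.1.2 b.1.2)
      (F.res inf_le_left a.2 + F.res inf_le_right b.2))
    (by
      rintro a₁ a₂ b₁ b₂ ⟨W, hxW, h1, h2, h⟩ ⟨W', hxW', h1', h2', h'⟩
      refine germ_ext F _ _ _ _ (mem_inf' hxW hxW')
        (le_inf (inf_le_left.trans h1) (inf_le_right.trans h1'))
        (le_inf (inf_le_left.trans h2) (inf_le_right.trans h2')) ?_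
      have e1 := congrArg (F.res (inf_le_left : W ⊓ W' ≤ W)) h
      have e2 := congrArg (F.res (inf_le_right : W ⊓ W' ≤ W')) h'
      rw [F.res_res, F.res_res] at e1
      rw [F.res_res, F.res_res] at e2
      simp only [map_add, F.res_res]
      rw [e1, e2]) a b

protected noncomputable def Stalk.neg (a : Stalk F x) : Stalk F x :=
  Quotient.map (fun a => ⟨a.1, -a.2⟩)
    (by
      rintro a b ⟨W, hxW, h1, h2, h⟩
      exact ⟨W, hxW, h1, h2, by rw [map_neg, map_neg, h]⟩) a

noncomputable instance : Zero (Stalk F x) := ⟨germ F x (Opens.mem_top x) (0 : F.sec ⊤)⟩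
noncomputable instance : Add (Stalk F x) := ⟨Stalk.add⟩
noncomputable instance : Neg (Stalk F x) := ⟨Stalk.neg⟩

noncomputable instance : AddCommGroup (Stalk F x) where
  add := (· + ·)
  zero := 0
  neg := Neg.neg
  nsmul := nsmulRec
  zsmul := zsmulRec
  add_assoc a b c := by
    induction a using Quotient.inductionOn with | _ a =>
    induction b using Quotient.inductionOn with | _ b =>
    induction c using Quotient.inductionOn with | _ c =>
    refine germ_ext F _ _ _ _
      (mem_inf' (mem_inf' a.1.2 b.1.2) c.1.2)
      le_rfl (by simp [inf_assoc]) ?_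
    simp only [map_add, F.res_res]
    exact add_assoc _ _ _
  zero_add a := by
    induction a using Quotient.inductionOn with | _ a =>
    refine germ_ext F _ _ _ _ (mem_inf' (Opens.mem_top x) a.1.2)
      le_rfl inf_le_right ?_
    simp only [map_add, map_zero, F.res_res, zero_add]
  add_zero a := by
    induction a using Quotient.inductionOn with | _ a =>
    refine germ_ext F _ _ _ _ (mem_inf' a.1.2 (Opens.mem_top x))
      le_rfl inf_le_left ?_
    simp only [map_add, map_zero, F.res_res, add_zero]
  neg_add_cancel a := by
    induction a using Quotient.inductionOn with | _ a =>
    refine germ_ext F _ _ _ _ (mem_inf' a.1.2 a.1.2)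
      le_rfl (le_top.trans le_rfl) ?_
    simp only [map_add, map_neg, map_zero, F.res_res, neg_add_cancel]
  add_comm a b := by
    induction a using Quotient.inductionOn with | _ a =>
    induction b using Quotient.inductionOn with | _ b =>
    refine germ_ext F _ _ _ _ (mem_inf' a.1.2 b.1.2)
      le_rfl (le_inf inf_le_right inf_le_left) ?_
    simp only [map_add, F.res_res]
    exact add_comm _ _

/-- A morphism of presheaves. -/
structure PshHom (F G : Psh K X) where
  app : ∀ U : Opens X, F.sec U →ₗ[K] G.sec U
  natural : ∀ {U V : Opens X} (h : V ≤ U) (s : F.sec U),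
    G.res h (app U s) = app V (F.res h s)

/-- The map induced on stalks by a morphism of presheaves. -/
def stalkFun {F G : Psh K X} (φ : PshHom F G) (x : X) :
    Stalk F x → Stalk G x :=
  Quotient.map (fun a => ⟨a.1, φ.app a.1.1 a.2⟩)
    (by
      rintro a b ⟨W, hxW, h1, h2, h⟩
      exact ⟨W, hxW, h1, h2, by rw [φ.natural, φ.natural, h]⟩)

/-- Global sections of the sheafification: locally representable families of
germs. -/
def Gsh (F : Psh K X) : Set (∀ x : X, Stalk F x) :=
  {σ | ∀ x : X, ∃ (U : Opens X) (_ : x ∈ U) (s : F.sec U),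
    ∀ y (hy : y ∈ U), σ y = germ F y hy s}

/-- The natural map from global presheaf sections to germ families. -/
def toPi (F : Psh K X) (s : F.sec ⊤) : ∀ x : X, Stalk F x :=
  fun x => germ F x (Opens.mem_top x) s

/-- The differential induced on germ families by a morphism of presheaves. -/
def dPi {F G : Psh K X} (φ : PshHom F G) (σ : ∀ x : X, Stalk F x) :
    ∀ x : X, Stalk G x := fun x => stalkFun φ x (σ x)

/-!
Let `t` be a locally representable germ family. By the surjectivity property and compactness
there is a finite open cover `(N i)` and global sections `g i` whose germs agree with `t` on
`N i`. The operators `ℓ i` given by homotopy fineness for this cover are supported in `N i`,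
so the germs of `∑ i, ℓ i (g i)` are those of `t + k d t + d k t` everywhere. For a cocycle `t`
this global section is cohomologous to `t`; for `t = u` with `d u` the germ family of a
global cocycle `s`, it yields a global primitive of `s`. The injectivity property transfers
identities between germ families back to `F̃(X)`.
-/

section Germs

variable (F : Psh K X)

theorem germ_res {U V : Opens X} (h : V ≤ U) (x : X) (hxV : x ∈ V) (s : F.sec U) :
    germ F x hxV (F.res h s) = germ F x (h hxV) s :=
  germ_ext F hxV (h hxV) _ s hxV le_rfl h (F.res_res h le_rfl s)

theorem germ_add {U : Opens X} {x : X} (hx : x ∈ U) (s t : F.sec U) :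
    germ F x hx (s + t) = germ F x hx s + germ F x hx t := by
  refine (germ_ext F (mem_inf' hx hx) hx _ _ (mem_inf' hx hx) le_rfl inf_le_left ?_).symm
  rw [F.res_rfl, map_add]

theorem germ_zero {U : Opens X} {x : X} (hx : x ∈ U) : germ F x hx (0 : F.sec U) = 0 :=
  germ_ext F hx (Opens.mem_top x) _ _ hx le_rfl le_top (by rw [map_zero, map_zero])

def germHom {U : Opens X} (x : X) (hx : x ∈ U) : F.sec U →+ Stalk F x where
  toFun := germ F x hx
  map_zero' := germ_zero F hx
  map_add' := germ_add F hx

theorem germ_sum {ι : Type} (s : Finset ι) {U : Opens X} {x : X} (hx : x ∈ U)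
    (f : ι → F.sec U) : germ F x hx (∑ i ∈ s, f i) = ∑ i ∈ s, germ F x hx (f i) :=
  map_sum (germHom F x hx) f s

theorem toPi_zero : toPi F 0 = 0 :=
  funext fun x => germ_zero F (Opens.mem_top x)

theorem toPi_sub (s t : F.sec ⊤) : toPi F (s - t) = toPi F s - toPi F t :=
  funext fun x => map_sub (germHom F x (Opens.mem_top x)) s t

theorem toPi_sum {ι : Type} (s : Finset ι) (f : ι → F.sec ⊤) :
    toPi F (∑ i ∈ s, f i) = ∑ i ∈ s, toPi F (f i) := by
  funext x
  rw [Finset.sum_apply]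
  exact germ_sum F s (Opens.mem_top x) f

end Germs

section StalkMaps

variable {F G : Psh K X}

theorem stalkFun_germ (φ : PshHom F G) {U : Opens X} (x : X) (hx : x ∈ U) (s : F.sec U) :
    stalkFun φ x (germ F x hx s) = germ G x hx (φ.app U s) := rfl

theorem stalkFun_zero (φ : PshHom F G) (x : X) : stalkFun φ x 0 = 0 := by
  change germ G x (Opens.mem_top x) (φ.app ⊤ 0) = 0
  rw [map_zero, germ_zero]

theorem stalkFun_add (φ : PshHom F G) (x : X) (a b : Stalk F x) :
    stalkFun φ x (a + b) = stalkFun φ x a + stalkFun φ x b := by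
  induction a using Quotient.inductionOn with | _ a =>
  induction b using Quotient.inductionOn with | _ b =>
  change germ G x (mem_inf' a.1.2 b.1.2)
      (φ.app _ (F.res inf_le_left a.2 + F.res inf_le_right b.2)) =
    germ G x (mem_inf' a.1.2 b.1.2)
      (G.res inf_le_left (φ.app _ a.2) + G.res inf_le_right (φ.app _ b.2))
  rw [map_add, φ.natural, φ.natural]

theorem stalkFun_eq_zero_of_notMem {φ : PshHom F G} {C : Set X} (hC : IsClosed C)
    (hφ : ∀ V : Opens X, (V : Set X) ∩ C = ∅ → ∀ s : F.sec V, φ.app V s = 0)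
    {x : X} (hx : x ∉ C) (a : Stalk F x) : stalkFun φ x a = 0 := by
  induction a using Quotient.inductionOn with | _ a =>
  let V : Opens X := a.1.1 ⊓ ⟨Cᶜ, hC.isOpen_compl⟩
  have hxV : x ∈ V := mem_inf' a.1.2 hx
  change germ G x a.1.2 (φ.app _ a.2) = 0
  rw [← germ_res G inf_le_left x hxV, φ.natural,
    hφ V (Set.eq_empty_of_forall_notMem fun y hy => hy.1.2 hy.2), germ_zero]

theorem sum_stalkFun_of_homotopy {ι : Type} [Fintype ι] {F₀ F₂ : Psh K X}
    {d₀ : PshHom F₀ F} {d₁ : PshHom F F₂} {k₀ : PshHom F F₀} {k₁ : PshHom F₂ F}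
    {ℓ : ι → PshHom F F}
    (h : ∀ (V : Opens X) (s : F.sec V),
      ∑ i, (ℓ i).app V s = s + k₁.app V (d₁.app V s) + d₀.app V (k₀.app V s))
    (x : X) (a : Stalk F x) :
    ∑ i, stalkFun (ℓ i) x a =
      a + stalkFun k₁ x (stalkFun d₁ x a) + stalkFun d₀ x (stalkFun k₀ x a) := by
  induction a using Quotient.inductionOn with | _ a =>
  change ∑ i, germ F x a.1.2 ((ℓ i).app _ a.2) =
    germ F x a.1.2 a.2 + germ F x a.1.2 (k₁.app _ (d₁.app _ a.2)) +
      germ F x a.1.2 (d₀.app _ (k₀.app _ a.2))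
  rw [← germ_sum, h, germ_add, germ_add]

end StalkMaps

section GermFamilies

variable {F G : Psh K X}

theorem dPi_toPi (φ : PshHom F G) (s : F.sec ⊤) : dPi φ (toPi F s) = toPi G (φ.app ⊤ s) :=
  rfl

theorem dPi_zero (φ : PshHom F G) : dPi φ 0 = 0 :=
  funext (stalkFun_zero φ)

theorem dPi_add (φ : PshHom F G) (σ τ : ∀ x, Stalk F x) :
    dPi φ (σ + τ) = dPi φ σ + dPi φ τ :=
  funext fun x => stalkFun_add φ x (σ x) (τ x)

theorem dPi_mem_Gsh (φ : PshHom F G) {σ : ∀ x, Stalk F x} (hσ : σ ∈ Gsh F) :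
    dPi φ σ ∈ Gsh G := by
  intro x
  obtain ⟨U, hx, r, hr⟩ := hσ x
  exact ⟨U, hx, φ.app U r, fun y hy => by rw [dPi, hr y hy, stalkFun_germ]⟩

theorem dPi_dPi_eq_zero {F₀ F₁ F₂ : Psh K X}
    {d₀ : PshHom F₀ F₁} {d₁ : PshHom F₁ F₂}
    (hdd : ∀ (U : Opens X) (s : F₀.sec U), d₁.app U (d₀.app U s) = 0)
    (σ : ∀ x, Stalk F₀ x) : dPi d₁ (dPi d₀ σ) = 0 := by
  funext x
  change stalkFun d₁ x (stalkFun d₀ x (σ x)) = 0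
  induction σ x using Quotient.inductionOn with | _ a =>
  change germ F₂ x a.1.2 (d₁.app _ (d₀.app _ a.2)) = 0
  rw [hdd, germ_zero]

theorem toPi_app_eq_dPi_of_supported {φ : PshHom F G} {C : Set X} (hC : IsClosed C)
    (hφ : ∀ V : Opens X, (V : Set X) ∩ C = ∅ → ∀ s : F.sec V, φ.app V s = 0)
    {N : Opens X} (hCN : C ⊆ N) {g : F.sec ⊤} {σ : ∀ x, Stalk F x}
    (hgσ : ∀ y ∈ N, toPi F g y = σ y) : toPi G (φ.app ⊤ g) = dPi φ σ := by
  funext x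
  by_cases hxN : x ∈ N
  · rw [← dPi_toPi, dPi, dPi, hgσ x hxN]
  · have hxC : x ∉ C := fun h => hxN (hCN h)
    exact (stalkFun_eq_zero_of_notMem hC hφ hxC (toPi F g x)).trans
      (stalkFun_eq_zero_of_notMem hC hφ hxC (σ x)).symm

theorem exists_toPi_eq_near_of_mem_Gsh
    (hsurj : ∀ x : X, Function.Surjective fun s : F.sec ⊤ => germ F x (Opens.mem_top x) s)
    {σ : ∀ x, Stalk F x} (hσ : σ ∈ Gsh F) (x : X) :
    ∃ (N : Opens X) (g : F.sec ⊤), x ∈ N ∧ ∀ y ∈ N, toPi F g y = σ y := by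
  obtain ⟨U, hxU, r, hr⟩ := hσ x
  obtain ⟨g, hg⟩ := hsurj x (σ x)
  rw [hr x hxU] at hg
  obtain ⟨W, hxW, hWtop, hWU, hres⟩ := Quotient.exact hg
  refine ⟨W, g, hxW, fun y hy => ?_⟩
  rw [hr y (hWU hy)]
  exact germ_ext F _ _ _ _ hy hWtop hWU hres

theorem exists_finite_cover_toPi_eq_of_mem_Gsh [CompactSpace X]
    (hsurj : ∀ x : X, Function.Surjective fun s : F.sec ⊤ => germ F x (Opens.mem_top x) s)
    {σ : ∀ x, Stalk F x} (hσ : σ ∈ Gsh F) :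
    ∃ (ι : Type) (_ : Fintype ι) (N : ι → Opens X) (g : ι → F.sec ⊤),
      (⨆ i, N i) = ⊤ ∧ ∀ i, ∀ y ∈ N i, toPi F (g i) y = σ y := by
  choose N g hxN hNg using exists_toPi_eq_near_of_mem_Gsh hsurj hσ
  obtain ⟨fs, hfs⟩ := CompactSpace.elim_nhds_subcover (fun x => (N x : Set X))
    fun x => (N x).isOpen.mem_nhds (hxN x)
  refine ⟨fs, inferInstance, fun i => N i, fun i => g i, ?_, fun i => hNg i⟩
  refine eq_top_iff.2 fun y _ => ?_
  obtain ⟨x, hx, hy⟩ := Set.mem_iUnion₂.1 (hfs.ge (Set.mem_univ y))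
  exact Opens.mem_iSup.2 ⟨⟨x, hx⟩, hy⟩

end GermFamilies

def IsHomotopicallyFine (F : ℤ → Psh K X) (d : ∀ p : ℤ, PshHom (F p) (F (p + 1))) : Prop :=
  ∀ (ι : Type) [Fintype ι] (U : ι → Opens X), (⨆ i, U i) = ⊤ →
    ∃ (Fc : ι → Set X), (∀ i, IsClosed (Fc i) ∧ Fc i ⊆ (U i : Set X)) ∧
    ∃ (ℓ : ι → ∀ p : ℤ, PshHom (F p) (F p))
      (k : ∀ p : ℤ, PshHom (F (p + 1)) (F p)),
      (∀ i (p : ℤ) (V : Opens X), (V : Set X) ∩ Fc i = ∅ →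
        ∀ s : (F p).sec V, (ℓ i p).app V s = 0) ∧
      (∀ (p : ℤ) (V : Opens X) (s : (F (p + 1)).sec V),
        ∑ i, (ℓ i (p + 1)).app V s =
          s + (k (p + 1)).app V ((d (p + 1)).app V s) +
            (d p).app V ((k p).app V s))

section HomotopicallyFine

variable [CompactSpace X] {F : ℤ → Psh K X} {d : ∀ p : ℤ, PshHom (F p) (F (p + 1))}

theorem exists_toPi_eq_homotopy (hfine : IsHomotopicallyFine F d) {q : ℤ}
    (hsurj : ∀ x : X, Function.Surjective
      fun s : (F (q + 1)).sec ⊤ => germ (F (q + 1)) x (Opens.mem_top x) s)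
    {σ : ∀ x, Stalk (F (q + 1)) x} (hσ : σ ∈ Gsh (F (q + 1))) :
    ∃ (s : (F (q + 1)).sec ⊤) (k : PshHom (F (q + 1 + 1)) (F (q + 1)))
      (k' : PshHom (F (q + 1)) (F q)),
      toPi (F (q + 1)) s = σ + dPi k (dPi (d (q + 1)) σ) + dPi (d q) (dPi k' σ) := by
  obtain ⟨ι, _, N, g, hcov, hgσ⟩ := exists_finite_cover_toPi_eq_of_mem_Gsh hsurj hσ
  obtain ⟨C, hC, ℓ, k, hℓ, hhom⟩ := hfine ι N hcov
  refine ⟨∑ i, (ℓ i (q + 1)).app ⊤ (g i), k (q + 1), k q, ?_⟩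
  have hloc : ∀ i, toPi (F (q + 1)) ((ℓ i (q + 1)).app ⊤ (g i)) = dPi (ℓ i (q + 1)) σ :=
    fun i => toPi_app_eq_dPi_of_supported (hC i).1 (hℓ i (q + 1)) (hC i).2 (hgσ i)
  funext x
  rw [toPi_sum, Finset.sum_congr rfl fun i _ => hloc i, Finset.sum_apply]
  exact sum_stalkFun_of_homotopy (hhom q) x (σ x)

theorem exists_cohomologous_global_cocycle (hfine : IsHomotopicallyFine F d) {p : ℤ}
    (hdd : ∀ (U : Opens X) (s : (F p).sec U), (d (p + 1)).app U ((d p).app U s) = 0)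
    (hsurj : ∀ x : X, Function.Surjective
      fun s : (F (p + 1)).sec ⊤ => germ (F (p + 1)) x (Opens.mem_top x) s)
    (hinj : Function.Injective (toPi (F (p + 1 + 1))))
    {t : ∀ x, Stalk (F (p + 1)) x} (ht : t ∈ Gsh (F (p + 1))) (hdt : dPi (d (p + 1)) t = 0) :
    ∃ s : (F (p + 1)).sec ⊤, (d (p + 1)).app ⊤ s = 0 ∧
      ∃ u ∈ Gsh (F p), toPi (F (p + 1)) s - t = dPi (d p) u := by
  obtain ⟨s, k, k', hs⟩ := exists_toPi_eq_homotopy hfine hsurj ht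
  rw [hdt, dPi_zero, add_zero] at hs
  refine ⟨s, hinj ?_, dPi k' t, dPi_mem_Gsh k' ht, by rw [hs, add_sub_cancel_left]⟩
  rw [← dPi_toPi, hs, dPi_add, hdt, dPi_dPi_eq_zero hdd, add_zero, toPi_zero]

theorem exists_global_primitive (hfine : IsHomotopicallyFine F d) {q : ℤ}
    (hdd : ∀ (U : Opens X) (s : (F q).sec U), (d (q + 1)).app U ((d q).app U s) = 0)
    (hsurj : ∀ x : X, Function.Surjective
      fun s : (F (q + 1)).sec ⊤ => germ (F (q + 1)) x (Opens.mem_top x) s)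
    (hinj : Function.Injective (toPi (F (q + 1 + 1))))
    {s : (F (q + 1 + 1)).sec ⊤} {u : ∀ x, Stalk (F (q + 1)) x} (hu : u ∈ Gsh (F (q + 1)))
    (hsu : toPi (F (q + 1 + 1)) s = dPi (d (q + 1)) u) :
    ∃ v : (F (q + 1)).sec ⊤, s = (d (q + 1)).app ⊤ v := by
  obtain ⟨w, k, k', hw⟩ := exists_toPi_eq_homotopy hfine hsurj hu
  have hv : toPi (F (q + 1)) (w - k.app ⊤ s) = u + dPi (d q) (dPi k' u) := by
    rw [toPi_sub, hw, ← hsu, dPi_toPi]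
    abel
  refine ⟨w - k.app ⊤ s, hinj ?_⟩
  rw [← dPi_toPi, hv, dPi_add, dPi_dPi_eq_zero hdd, add_zero, hsu]

end HomotopicallyFine

theorem homotopically_fine_differential_presheaf_cohomology
    [CompactSpace X]
    (F : ℤ → Psh K X) (d : ∀ p : ℤ, PshHom (F p) (F (p + 1)))
    -- `(F̃, d)` is a complex
    (hdd : ∀ (p : ℤ) (U : Opens X) (s : (F p).sec U),
      (d (p + 1)).app U ((d p).app U s) = 0)
    -- `(F̃, d)` is homotopically fine
    (hfine : ∀ (ι : Type) [Fintype ι] (U : ι → Opens X), (⨆ i, U i) = ⊤ →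
      ∃ (Fc : ι → Set X), (∀ i, IsClosed (Fc i) ∧ Fc i ⊆ (U i : Set X)) ∧
      ∃ (ℓ : ι → ∀ p : ℤ, PshHom (F p) (F p))
        (k : ∀ p : ℤ, PshHom (F (p + 1)) (F p)),
        (∀ i (p : ℤ) (V : Opens X), (V : Set X) ∩ Fc i = ∅ →
          ∀ s : (F p).sec V, (ℓ i p).app V s = 0) ∧
        (∀ (p : ℤ) (V : Opens X) (s : (F (p + 1)).sec V),
          ∑ i, (ℓ i (p + 1)).app V s =
            s + (k (p + 1)).app V ((d (p + 1)).app V s) +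
              (d p).app V ((k p).app V s)))
    -- surjectivity property for every graded piece
    (hsurj : ∀ (p : ℤ) (x : X), Function.Surjective
      (fun s : (F p).sec ⊤ => germ (F p) x (Opens.mem_top x) s))
    -- injectivity property for every graded piece
    (hinj : ∀ p : ℤ, Function.Injective (toPi (F p))) :
    -- the natural map `F̃(X) → Γ(X, F)` is a chain map …
    (∀ (p : ℤ) (s : (F p).sec ⊤),
      toPi (F (p + 1)) ((d p).app ⊤ s) = dPi (d p) (toPi (F p) s)) ∧
    -- … inducing a surjection on cohomology in every degree …
    (∀ (p : ℤ) (t : ∀ x : X, Stalk (F (p + 1)) x), t ∈ Gsh (F (p + 1)) →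
      dPi (d (p + 1)) t = 0 →
      ∃ s : (F (p + 1)).sec ⊤, (d (p + 1)).app ⊤ s = 0 ∧
        ∃ u ∈ Gsh (F p), toPi (F (p + 1)) s - t = dPi (d p) u) ∧
    -- … and an injection on cohomology in every degree
    (∀ (p : ℤ) (s : (F (p + 1)).sec ⊤), (d (p + 1)).app ⊤ s = 0 →
      (∃ u ∈ Gsh (F p), toPi (F (p + 1)) s = dPi (d p) u) →
      ∃ v : (F p).sec ⊤, s = (d p).app ⊤ v) := by
  refine ⟨fun p s => (dPi_toPi (d p) s).symm, fun p t ht hdt =>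
    exists_cohomologous_global_cocycle hfine (hdd p) (hsurj (p + 1)) (hinj (p + 1 + 1))
      ht hdt, ?_⟩
  rintro p s - ⟨u, hu, hsu⟩
  obtain ⟨q, rfl⟩ : ∃ q, q + 1 = p := ⟨p - 1, sub_add_cancel p 1⟩
  exact exists_global_primitive hfine (hdd q) (hsurj (q + 1)) (hinj (q + 1 + 1)) hu hsu

end Stmt5
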